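/- arXiv:2212.07853 — 3 statements merged into one kernel-verified Lean document; each statement's English description precedes it below -/
import Mathlib

section
/- Let G be a group acting on a set Ω. Every independent sequence of points of Ω can be reordered to form an irredundant sequence. Hence Height(G,Ω) ≤ Irred(G,Ω). -/
def listStab (G : Type*) {Ω : Type*} [Group G] [MulAction G Ω] (l : List Ω) : Subgroup G :=
  ⨅ ω ∈ l, MulAction.stabilizer G ω

def IsBase (G : Type*) {Ω : Type*} [Group G] [MulAction G Ω] (l : List Ω) : Prop :=
  listStab G l = ⊥

def IsIrredundant (G : Type*) {Ω : Type*} [Group G] [MulAction G Ω] (l : List Ω) : Prop :=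
  ∀ k < l.length, listStab G (l.take (k + 1)) < listStab G (l.take k)

def IsMinimalBase (G : Type*) {Ω : Type*} [Group G] [MulAction G Ω] (l : List Ω) : Prop :=
  IsBase G l ∧ ∀ l' : List Ω, l'.Sublist l → l' ≠ l → ¬ IsBase G l'

def IsIndependentSeq (G : Type*) {Ω : Type*} [Group G] [MulAction G Ω] (l : List Ω) : Prop :=
  ∀ k < l.length, listStab G (l.eraseIdx k) ≠ listStab G l

noncomputable def minBaseSize (G Ω : Type*) [Group G] [MulAction G Ω] : ℕ∞ :=
  sInf {n : ℕ∞ | ∃ l : List Ω, IsBase G l ∧ (l.length : ℕ∞) = n}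

noncomputable def maxMinBase (G Ω : Type*) [Group G] [MulAction G Ω] : ℕ∞ :=
  sSup {n : ℕ∞ | ∃ l : List Ω, IsMinimalBase G l ∧ (l.length : ℕ∞) = n}

noncomputable def heightStat (G Ω : Type*) [Group G] [MulAction G Ω] : ℕ∞ :=
  sSup {n : ℕ∞ | ∃ l : List Ω, IsIndependentSeq G l ∧ (l.length : ℕ∞) = n}

noncomputable def irredStat (G Ω : Type*) [Group G] [MulAction G Ω] : ℕ∞ :=
  sSup {n : ℕ∞ | ∃ l : List Ω, IsIrredundant G l ∧ (l.length : ℕ∞) = n}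


theorem listStab_append {G Ω : Type*} [Group G] [MulAction G Ω] (l1 l2 : List Ω) :
    listStab G (l1 ++ l2) = listStab G l1 ⊓ listStab G l2 := by
  simp [listStab, List.mem_append, iInf_or, iInf_inf_eq]

theorem indep_irred {G Ω : Type*} [Group G] [MulAction G Ω] (l : List Ω)
    (hl : IsIndependentSeq G l) : IsIrredundant G l := by
  intro k hk
  have htake : l.take (k + 1) = l.take k ++ [l[k]] := by
    rw [List.take_succ]
    simp [List.getElem?_eq_getElem hk]
  have hle : listStab G (l.take (k + 1)) ≤ listStab G (l.take k) := by
    rw [htake, listStab_append]; exact inf_le_left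
  refine lt_of_le_of_ne hle ?_
  intro heq
  apply hl k hk
  have hl' : l = l.take (k + 1) ++ l.drop (k + 1) := (List.take_append_drop _ _).symm
  have he : l.eraseIdx k = l.take k ++ l.drop (k + 1) :=
    List.eraseIdx_eq_take_drop_succ l k
  rw [he, listStab_append]
  conv_rhs => rw [hl']
  rw [listStab_append, heq]

/-- Every independent sequence can be reordered to an irredundant sequence;
hence `Height(G,Ω) ≤ Irred(G,Ω)`. -/
theorem stmt_2 {G Ω : Type*} [Group G] [MulAction G Ω] :
    (∀ l : List Ω, IsIndependentSeq G l →
      ∃ l' : List Ω, List.Perm l' l ∧ IsIrredundant G l') ∧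
    heightStat G Ω ≤ irredStat G Ω := by
  constructor
  · intro l hl
    exact ⟨l, List.Perm.refl l, indep_irred l hl⟩
  · apply sSup_le_sSup
    rintro n ⟨l, hl, hn⟩
    exact ⟨l, indep_irred l hl, hn⟩
end

section
/- Let q = 2^c with c > 1, let G = SL_2(F_q), let U be a Sylow 2-subgroup of G, and let H ≤ U have index 2. For the action of G on the right cosets of H, the maximum size of a minimal base satisfies Base(G, G/H) ≥ c. -/
/-!
After conjugation, `U` is the group of matrices `u a = !![1, a; 0, 1]`, a copy of `(F_q, +)`, and
`H` corresponds to the kernel of a nonzero `F_2`-linear functional `φ` on `F_q`. Since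
`d s * u a * (d s)⁻¹ = u (s ^ 2 * a)` for `d s = diag(s, s⁻¹)`, the point `(d s)⁻¹ • H` has its
stabiliser inside `U`, equal to `{u a | φ (s ^ 2 * a) = 0}`. Every element of `F_q` is a square, so
for an `F_2`-basis `b` of `F_q` we get `c` points whose stabilisers are cut out by the functionals
`a ↦ φ (b i * a)`. These form a basis of the dual space because `(x, y) ↦ φ (x * y)` is
nondegenerate: together they have trivial common kernel, while any `c - 1` of them vanish on a
vector of the dual basis. Hence the points form a minimal base of size `c`.
-/

open MulAction Module Matrix
open scoped MatrixGroups

section Bases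

variable {G Ω : Type*} [Group G] [MulAction G Ω]

lemma mem_listStab {l : List Ω} {g : G} : g ∈ listStab G l ↔ ∀ ω ∈ l, g ∈ stabilizer G ω := by
  simp [listStab, Subgroup.mem_iInf]

lemma mem_stabilizer_smul_iff {g x : G} {ω : Ω} :
    x ∈ stabilizer G (g • ω) ↔ g⁻¹ * x * g ∈ stabilizer G ω := by
  rw [stabilizer_smul_eq_stabilizer_map_conj, Subgroup.mem_map_equiv, MulAut.conj_symm_apply]

lemma IsMinimalBase.length_le_maxMinBase {l : List Ω} (hl : IsMinimalBase G l) :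
    (l.length : ℕ∞) ≤ maxMinBase G Ω :=
  le_sSup ⟨l, hl, rfl⟩

lemma List.Sublist.exists_mem_notMem {α : Type*} {l' l : List α} (h : l'.Sublist l)
    (hl : l.Nodup) (hne : l' ≠ l) : ∃ a ∈ l, a ∉ l' := by
  by_contra! hsub
  exact hne (h.eq_of_length (h.length_le.antisymm (List.subperm_of_subset hl hsub).length_le))

lemma isMinimalBase_ofFn {n : ℕ} {ω : Fin n → Ω} (hbase : IsBase G (List.ofFn ω))
    (hcrit : ∀ i, ∃ g : G, g ≠ 1 ∧ ∀ j ≠ i, g ∈ stabilizer G (ω j)) :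
    IsMinimalBase G (List.ofFn ω) := by
  have eq_one_of_forall_mem {g : G} (hg : ∀ i, g ∈ stabilizer G (ω i)) : g = 1 := by
    rw [← Subgroup.mem_bot, ← show listStab G (List.ofFn ω) = ⊥ from hbase, mem_listStab]
    simpa [List.mem_ofFn] using hg
  have hinj : Function.Injective ω := fun i j hij => by
    by_contra hne
    obtain ⟨g, hg1, hg⟩ := hcrit i
    refine hg1 (eq_one_of_forall_mem fun k => ?_)
    obtain rfl | hk := eq_or_ne k i
    · exact hij ▸ hg j (Ne.symm hne)
    · exact hg k hk
  refine ⟨hbase, fun l' hsub hne hbase' => ?_⟩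
  obtain ⟨_, hi, hil'⟩ := hsub.exists_mem_notMem (List.nodup_ofFn.mpr hinj) hne
  obtain ⟨i, rfl⟩ := List.mem_ofFn.mp hi
  obtain ⟨g, hg1, hg⟩ := hcrit i
  refine hg1 (Subgroup.mem_bot.mp (hbase' ▸ mem_listStab.mpr fun τ hτ => ?_))
  obtain ⟨j, rfl⟩ := List.mem_ofFn.mp (hsub.subset hτ)
  exact hg j (by rintro rfl; exact hil' hτ)

end Bases

lemma AddSubgroup.exists_linearMap_zmod_two {A : Type*} [AddCommGroup A] [Module (ZMod 2) A]
    {K : AddSubgroup A} (hK : K.index = 2) :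
    ∃ φ : A →ₗ[ZMod 2] ZMod 2, φ ≠ 0 ∧ ∀ a, φ a = 0 ↔ a ∈ K := by
  classical
  let φ : A →+ ZMod 2 :=
    { toFun a := if a ∈ K then 0 else 1
      map_zero' := by simp [K.zero_mem]
      map_add' a b := by
        by_cases ha : a ∈ K <;> by_cases hb : b ∈ K <;>
          simp [AddSubgroup.add_mem_iff_of_index_two hK, ha, hb]; decide }
  have hφ (a : A) : φ a = 0 ↔ a ∈ K := by
    by_cases ha : a ∈ K <;> simp [φ, ha]
  refine ⟨φ.toZModLinearMap 2, fun h0 => ?_, hφ⟩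
  have : K = ⊤ := eq_top_iff.mpr fun a _ => (hφ a).mp (LinearMap.congr_fun h0 a)
  simp [this] at hK

section MulForm

variable {K L : Type*} [Field K] [Field L] [Algebra K L]

def mulForm (φ : L →ₗ[K] K) : LinearMap.BilinForm K L := (LinearMap.mul K L).compr₂ φ

@[simp] lemma mulForm_apply (φ : L →ₗ[K] K) (x y : L) : mulForm φ x y = φ (x * y) := rfl

lemma mulForm_nondegenerate {φ : L →ₗ[K] K} (hφ : φ ≠ 0) : (mulForm φ).Nondegenerate := by
  have hsymm : (mulForm φ).IsSymm := ⟨fun x y => by simp [mul_comm]⟩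
  refine hsymm.isRefl.nondegenerate_iff_separatingLeft.mpr fun x hx => ?_
  by_contra hx0
  obtain ⟨y, hy⟩ : ∃ y, φ y ≠ 0 := by
    by_contra! h
    exact hφ (LinearMap.ext h)
  exact hy (by simpa [mul_inv_cancel_left₀ hx0] using hx (x⁻¹ * y))

variable {ι : Type*} [DecidableEq ι] [Finite ι] {φ : L →ₗ[K] K}

lemma eq_zero_of_forall_apply_basis_mul_eq_zero (hφ : φ ≠ 0) (b : Basis ι K L) {x : L}
    (h : ∀ i, φ (b i * x) = 0) : x = 0 := by
  rw [← ((mulForm φ).dualBasis (mulForm_nondegenerate hφ) b).forall_coord_eq_zero_iff]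
  intro i
  simpa [mul_comm] using h i

lemma apply_basis_mul_mulForm_dualBasis (hφ : φ ≠ 0) (b : Basis ι K L) (i j : ι) :
    φ (b j * (mulForm φ).dualBasis (mulForm_nondegenerate hφ) b i) = if j = i then 1 else 0 := by
  rw [mul_comm, ← mulForm_apply, LinearMap.BilinForm.apply_dualBasis_left]

end MulForm

namespace Matrix.SpecialLinearGroup

variable {R : Type*} [CommRing R]

def upperRightHom : Multiplicative R →* SL(2, R) where
  toFun a := ⟨!![1, a.toAdd; 0, 1], by simp⟩
  map_one' := Subtype.ext (one_fin_two).symm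
  map_mul' a b := Subtype.ext <|
    show _ = !![1, a.toAdd; 0, 1] * !![1, b.toAdd; 0, 1] by simp [add_comm]

def diagonalHom : Rˣ →* SL(2, R) where
  toFun t := ⟨!![(t : R), 0; 0, ↑t⁻¹], by simp⟩
  map_one' := Subtype.ext <| by simp [one_fin_two]
  map_mul' s t := Subtype.ext <|
    show _ = !![(s : R), 0; 0, ↑s⁻¹] * !![(t : R), 0; 0, ↑t⁻¹] by simp [mul_comm]

@[simp] lemma coe_upperRightHom (a : Multiplicative R) :
    (upperRightHom a : Matrix (Fin 2) (Fin 2) R) = !![1, a.toAdd; 0, 1] := rfl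

@[simp] lemma coe_diagonalHom (t : Rˣ) :
    (diagonalHom t : Matrix (Fin 2) (Fin 2) R) = !![(t : R), 0; 0, ↑t⁻¹] := rfl

lemma upperRightHom_injective : Function.Injective (upperRightHom (R := R)) := fun a b h => by
  simpa using congr_arg (fun g : SL(2, R) => g 0 1) h

lemma diagonalHom_mul_upperRightHom_mul_inv (t : Rˣ) (a : R) :
    diagonalHom t * upperRightHom (.ofAdd a) * (diagonalHom t)⁻¹ =
      upperRightHom (.ofAdd ((t : R) ^ 2 * a)) := by
  rw [← map_inv]
  ext i j; fin_cases i <;> fin_cases j <;> simp [sq, mul_comm, mul_left_comm]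

lemma map_conj_diagonalHom_range_le (t : Rˣ) :
    (upperRightHom (R := R)).range.map (MulAut.conj (diagonalHom t)).toMonoidHom ≤
      upperRightHom.range := by
  rw [MonoidHom.map_range]
  rintro _ ⟨a, rfl⟩
  exact ⟨_, (diagonalHom_mul_upperRightHom_mul_inv t a.toAdd).symm⟩

section Stabilizers

variable {Ω : Type*} [MulAction SL(2, R) Ω] {ω : Ω}

lemma stabilizer_diagonalHom_smul_le (hω : stabilizer _ ω ≤ (upperRightHom (R := R)).range)
    (t : Rˣ) : stabilizer _ (diagonalHom t • ω) ≤ (upperRightHom (R := R)).range := by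
  rw [stabilizer_smul_eq_stabilizer_map_conj]
  exact (Subgroup.map_mono hω).trans (map_conj_diagonalHom_range_le t)

lemma upperRightHom_mem_stabilizer_diagonalHom_inv_smul_iff (t : Rˣ) (a : R) :
    upperRightHom (.ofAdd a) ∈ stabilizer _ (diagonalHom t⁻¹ • ω) ↔
      upperRightHom (.ofAdd ((t : R) ^ 2 * a)) ∈ stabilizer _ ω := by
  rw [mem_stabilizer_smul_iff, ← map_inv, inv_inv, map_inv, diagonalHom_mul_upperRightHom_mul_inv]

end Stabilizers

lemma card_mul_card_sub_one_eq_card_GL {ι F : Type*} [Fintype ι] [DecidableEq ι] [Nonempty ι] [Field F]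
    [Finite F] :
    Nat.card (SpecialLinearGroup ι F) * (Nat.card F - 1) = Nat.card (GL ι F) := by
  rw [← Nat.card_units, ← Nat.card_range_of_injective toGL_injective, range_toGL,
    ← (GeneralLinearGroup.det (n := ι) (R := F)).ker.card_mul_index, Subgroup.index_ker,
    MonoidHom.range_eq_top_of_surjective _ GeneralLinearGroup.det_surjective,
    Subgroup.card_top]
  rfl

lemma card_range_upperRightHom : Nat.card (upperRightHom (R := R)).range = Nat.card R := by
  rw [MonoidHom.range_eq_map, Subgroup.card_map_of_injective upperRightHom_injective,
    Subgroup.card_top]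
  rfl

lemma index_range_upperRightHom {F : Type*} [Field F] [Finite F] :
    (upperRightHom (R := F)).range.index = Nat.card F ^ 2 - 1 := by
  have := Fintype.ofFinite F
  set q := Nat.card F with hq
  have hq1 : 1 < q := Finite.one_lt_card
  have hGL : Nat.card (GL (Fin 2) F) = (q ^ 2 - 1) * q * (q - 1) := by
    rw [card_GL_field, Fin.prod_univ_two, ← Nat.card_eq_fintype_card, ← hq]
    simp [sq, Nat.mul_sub_one, mul_assoc]
  have key := card_mul_card_sub_one_eq_card_GL (ι := Fin 2) (F := F)
  rw [← (upperRightHom (R := F)).range.card_mul_index, card_range_upperRightHom, hGL] at key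
  have := Nat.eq_of_mul_eq_mul_right (by omega : 0 < q - 1) key
  exact Nat.eq_of_mul_eq_mul_left (by omega) (this.trans (mul_comm _ _))

variable (p : ℕ) (F : Type*) [Field F] [Finite F] [CharP F p]

lemma isPGroup_range_upperRightHom : IsPGroup p (upperRightHom (R := F)).range := by
  have := Fintype.ofFinite F
  obtain ⟨n, -, hn⟩ := FiniteField.card F p
  exact IsPGroup.of_card (n := n) (by rw [card_range_upperRightHom, Nat.card_eq_fintype_card, hn])

lemma not_dvd_index_range_upperRightHom [Fact p.Prime] :
    ¬ p ∣ (upperRightHom (R := F)).range.index := by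
  have := Fintype.ofFinite F
  obtain ⟨n, -, hn⟩ := FiniteField.card F p
  have hpq : p ∣ Nat.card F ^ 2 := by
    rw [Nat.card_eq_fintype_card, hn, ← pow_mul]
    exact dvd_pow_self p (by positivity)
  rw [index_range_upperRightHom]
  intro hp
  have hq : 1 ≤ Nat.card F ^ 2 := Nat.one_le_pow _ _ Nat.card_pos
  exact (Fact.out : p.Prime).not_dvd_one (Nat.sub_sub_self hq ▸ Nat.dvd_sub hpq hp)

noncomputable def upperRightSylow [Fact p.Prime] : Sylow p (SL(2, F)) :=
  (isPGroup_range_upperRightHom p F).toSylow (not_dvd_index_range_upperRightHom p F)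

@[simp] lemma coe_upperRightSylow [Fact p.Prime] :
    (upperRightSylow p F : Subgroup (SL(2, F))) = upperRightHom.range :=
  IsPGroup.toSylow_coe _ _

end Matrix.SpecialLinearGroup

open SpecialLinearGroup in
theorem finrank_le_maxMinBase_of_stabilizer_le {F Ω : Type*} [Field F] [Finite F]
    [Algebra (ZMod 2) F] [MulAction SL(2, F) Ω] (ω₀ : Ω)
    (hle : stabilizer _ ω₀ ≤ (upperRightHom (R := F)).range)
    (hidx : (stabilizer _ ω₀).relIndex (upperRightHom (R := F)).range = 2) :
    (finrank (ZMod 2) F : ℕ∞) ≤ maxMinBase SL(2, F) Ω := by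
  set K := (stabilizer _ ω₀).comap (upperRightHom (R := F))
  have hK : (Subgroup.toAddSubgroup' K).index = 2 := by
    rw [← AddSubgroup.index_toSubgroup, OrderIso.apply_symm_apply, Subgroup.index_comap, hidx]
  obtain ⟨φ, hφ0, hφ⟩ := AddSubgroup.exists_linearMap_zmod_two hK
  have : CharP F 2 := charP_of_injective_algebraMap (algebraMap (ZMod 2) F).injective 2
  let b := finBasis (ZMod 2) F
  have hsqrt (i : Fin (finrank (ZMod 2) F)) : ∃ s : Fˣ, (s : F) ^ 2 = b i := by
    obtain ⟨r, hr⟩ := FiniteField.isSquare_of_char_two (ringChar.eq F 2) (b i)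
    have hr0 : r ≠ 0 := by rintro rfl; exact b.ne_zero i (by simpa using hr)
    exact ⟨Units.mk0 r hr0, by simp [hr, sq]⟩
  choose s hs using hsqrt
  let ω i := diagonalHom (s i)⁻¹ • ω₀
  have mem_stabilizer i a : upperRightHom (.ofAdd a) ∈ stabilizer _ (ω i) ↔ φ (b i * a) = 0 := by
    rw [upperRightHom_mem_stabilizer_diagonalHom_inv_smul_iff, hs, hφ]
    rfl
  have hbase : IsBase SL(2, F) (List.ofFn ω) := by
    refine eq_bot_iff.mpr fun w hw => ?_
    have hw' i : w ∈ stabilizer _ (ω i) := mem_listStab.mp hw _ (List.mem_ofFn.mpr ⟨i, rfl⟩)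
    obtain ⟨a, rfl⟩ := stabilizer_diagonalHom_smul_le hle _ (hw' ⟨0, finrank_pos⟩)
    have ha : a = 1 := eq_zero_of_forall_apply_basis_mul_eq_zero hφ0 b fun i =>
      (mem_stabilizer i a.toAdd).mp (hw' i)
    simp [ha]
  have hcrit i : ∃ g : SL(2, F), g ≠ 1 ∧ ∀ j ≠ i, g ∈ stabilizer _ (ω j) := by
    let d := (mulForm φ).dualBasis (mulForm_nondegenerate hφ0) b
    refine ⟨upperRightHom (.ofAdd (d i)), fun h => d.ne_zero i ?_, fun j hj => ?_⟩
    · exact upperRightHom_injective (h.trans (map_one _).symm)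
    · rw [mem_stabilizer, apply_basis_mul_mulForm_dualBasis hφ0, if_neg hj]
  simpa using (isMinimalBase_ofFn hbase hcrit).length_le_maxMinBase

/-- for `q = 2^c` with `c > 1`, `G = SL_2(F_q)`, `U` a Sylow 2-subgroup
and `H ≤ U` of index 2, the action of `G` on the cosets of `H` satisfies
`Base(G, G/H) ≥ c`. -/
theorem stmt_8 (c : ℕ) (hc : 1 < c)
    (U : Sylow 2 (Matrix.SpecialLinearGroup (Fin 2) (GaloisField 2 c)))
    (H : Subgroup (Matrix.SpecialLinearGroup (Fin 2) (GaloisField 2 c)))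
    (hHU : H ≤ (U : Subgroup (Matrix.SpecialLinearGroup (Fin 2) (GaloisField 2 c))))
    (hidx : H.relIndex (U : Subgroup (Matrix.SpecialLinearGroup (Fin 2) (GaloisField 2 c))) = 2) :
    (c : ℕ∞) ≤ maxMinBase (Matrix.SpecialLinearGroup (Fin 2) (GaloisField 2 c))
      (Matrix.SpecialLinearGroup (Fin 2) (GaloisField 2 c) ⧸ H) := by
  obtain ⟨g, hg⟩ := exists_smul_eq SL(2, GaloisField 2 c) U
    (SpecialLinearGroup.upperRightSylow 2 (GaloisField 2 c))
  have hU : (U : Subgroup SL(2, GaloisField 2 c)).map (MulAut.conj g).toMonoidHom =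
      (SpecialLinearGroup.upperRightHom (R := GaloisField 2 c)).range := by
    rw [← SpecialLinearGroup.coe_upperRightSylow 2, ← hg, Sylow.smul_def, Sylow.pointwise_smul_def]
    rfl
  have hstab : stabilizer SL(2, GaloisField 2 c) (g • ((1 : SL(2, GaloisField 2 c)) : _ ⧸ H)) =
      H.map (MulAut.conj g).toMonoidHom := by
    rw [stabilizer_smul_eq_stabilizer_map_conj, stabilizer_quotient]
  calc (c : ℕ∞) = finrank (ZMod 2) (GaloisField 2 c) := by rw [GaloisField.finrank 2 (by omega)]
    _ ≤ _ := by
      refine finrank_le_maxMinBase_of_stabilizer_le _ (hstab ▸ hU ▸ Subgroup.map_mono hHU) ?_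
      rw [hstab, ← hU, Subgroup.relIndex_map_map_of_injective _ _ (MulAut.conj g).injective, hidx]
end

section
/- Let G be a finite group with a normal subgroup S, acting on Ω, and suppose G = G₁S where G₁ is a point stabilizer. Given a stabilizer chain G > G₁ > ⋯ > G_k = 1, set M_i = G_i ∩ S. Then for each i, either M_i > M_{i+1} or G_i/M_i > G_{i+1}/M_{i+1} (as subgroups of G/S under the natural isomorphisms). Consequently k ≤ ℓ(S-chain) + ℓ(G/S) where the number of indices i with M_i = M_{i+1} is at most the maximum length of a strict subgroup chain in G/S, which is at most log₂|G/S|. -/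
/-!
If `G_{i+1} < G_i` but `G_{i+1} ∩ S = G_i ∩ S`, then `G_{i+1}` and `G_i` have different images
in `G/S`: an element of `G_i` with the same image as some `b ∈ G_{i+1}` differs from `b` by an
element of `G_i ∩ S ⊆ G_{i+1}`. So every step at which `M_i = M_{i+1}` is a strict step of the
chain of images in `G/S`, and each strict step of a subgroup chain at least halves the order.
-/

open scoped Classical

namespace Subgroup

variable {G N : Type*} [Group G] [Group N]

theorem map_lt_map_of_lt_of_inf_ker_eq {f : G →* N} {H K : Subgroup G} (hHK : H < K)
    (hker : H ⊓ f.ker = K ⊓ f.ker) : H.map f < K.map f := by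
  refine lt_of_le_of_ne (map_mono hHK.le) fun hmap => hHK.not_ge fun g hg => ?_
  obtain ⟨b, hb, hfb⟩ : f g ∈ H.map f := hmap ▸ mem_map_of_mem f hg
  have hbg : b⁻¹ * g ∈ H ⊓ f.ker := by
    rw [hker]
    exact ⟨K.mul_mem (K.inv_mem (hHK.le hb)) hg, by simp [hfb]⟩
  simpa using H.mul_mem hb hbg.1

theorem two_mul_card_le_of_lt [Finite G] {H K : Subgroup G} (h : H < K) :
    2 * Nat.card H ≤ Nat.card K := by
  obtain ⟨m, hm⟩ := card_dvd_of_le h.le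
  have hm0 : m ≠ 0 := by
    rintro rfl
    exact Nat.card_pos.ne' (by simpa using hm)
  have hm1 : m ≠ 1 := by
    rintro rfl
    exact h.ne (eq_of_le_of_card_ge h.le (by simp [hm]))
  rw [hm, mul_comm]
  exact Nat.mul_le_mul_left _ (by omega)

end Subgroup

section SubgroupChain

variable {Γ : Type*} [Group Γ] [Finite Γ]

theorem two_pow_card_filter_lt_mul_card_le (Q : ℕ → Subgroup Γ) (n : ℕ)
    (hQ : ∀ i < n, Q (i + 1) ≤ Q i) :
    2 ^ ((Finset.range n).filter fun i => Q (i + 1) < Q i).card * Nat.card (Q n) ≤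
      Nat.card (Q 0) := by
  induction n with
  | zero => simp
  | succ n ih =>
    refine le_trans ?_ (ih fun i hi => hQ i (by omega))
    rw [Finset.range_add_one, Finset.filter_insert]
    split_ifs with hlt
    · rw [Finset.card_insert_of_notMem (by simp), pow_succ, mul_assoc]
      exact Nat.mul_le_mul_left _ (Subgroup.two_mul_card_le_of_lt hlt)
    · rw [((hQ n (by omega)).lt_or_eq.resolve_left hlt)]

theorem card_filter_lt_le_log (Q : ℕ → Subgroup Γ) (n : ℕ)
    (hQ : ∀ i < n, Q (i + 1) ≤ Q i) :
    ((Finset.range n).filter fun i => Q (i + 1) < Q i).card ≤ Nat.log 2 (Nat.card Γ) := by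
  refine Nat.le_log_of_pow_le one_lt_two ?_
  calc 2 ^ ((Finset.range n).filter fun i => Q (i + 1) < Q i).card
      ≤ 2 ^ ((Finset.range n).filter fun i => Q (i + 1) < Q i).card * Nat.card (Q n) :=
        Nat.le_mul_of_pos_right _ Nat.card_pos
    _ ≤ Nat.card (Q 0) := two_pow_card_filter_lt_mul_card_le Q n hQ
    _ ≤ Nat.card Γ := Subgroup.card_le_card_group _

end SubgroupChain

theorem stmt_16_general {G Ω : Type*} [Group G] [Finite G] [MulAction G Ω]
    (S : Subgroup G) [S.Normal]
    (l : List Ω) (hl : IsIrredundant G l) :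
    (∀ i < l.length,
      (listStab G (l.take (i + 1)) ⊓ S < listStab G (l.take i) ⊓ S) ∨
      ((listStab G (l.take (i + 1))).map (QuotientGroup.mk' S) <
        (listStab G (l.take i)).map (QuotientGroup.mk' S))) ∧
    ((Finset.range l.length).filter
        (fun i => listStab G (l.take (i + 1)) ⊓ S = listStab G (l.take i) ⊓ S)).card ≤
      Nat.log 2 (Nat.card (G ⧸ S)) := by
  set Q : ℕ → Subgroup (G ⧸ S) := fun i => (listStab G (l.take i)).map (QuotientGroup.mk' S)
  have hstep : ∀ i < l.length,
      (listStab G (l.take (i + 1)) ⊓ S < listStab G (l.take i) ⊓ S) ∨ Q (i + 1) < Q i :=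
    fun i hi => (inf_le_inf_right S (hl i hi).le).lt_or_eq.imp_right fun heq =>
      Subgroup.map_lt_map_of_lt_of_inf_ker_eq (hl i hi) (by rwa [QuotientGroup.ker_mk'])
  refine ⟨hstep, le_trans (Finset.card_le_card ?_)
    (card_filter_lt_le_log Q l.length fun i hi => Subgroup.map_mono (hl i hi).le)⟩
  intro i
  simp only [Finset.mem_filter, Finset.mem_range]
  exact fun ⟨hi, heq⟩ => ⟨hi, (hstep i hi).resolve_left heq.not_lt⟩

/-- let `S ⊴ G` finite, `G = G₁S` with `G₁` the first point stabilizer, and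
`G > G₁ > ⋯ > G_k = 1` a stabilizer chain coming from an irredundant base `l`.  With
`M_i = G_i ∩ S`, for each `i` either `M_i > M_{i+1}` or the image of `G_i` in `G/S`
properly contains that of `G_{i+1}`; consequently the number of indices with
`M_i = M_{i+1}` is at most the maximum length of a subgroup chain in `G/S`, which is at
most `log₂ |G/S|`. -/
theorem stmt_16 {G Ω : Type*} [Group G] [Finite G] [MulAction G Ω]
    (S : Subgroup G) [S.Normal]
    (l : List Ω) (hl : IsIrredundant G l) (hbase : IsBase G l) (hne : l ≠ [])
    (hGS : MulAction.stabilizer G (l.head hne) ⊔ S = ⊤) :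
    (∀ i < l.length,
      (listStab G (l.take (i + 1)) ⊓ S < listStab G (l.take i) ⊓ S) ∨
      ((listStab G (l.take (i + 1))).map (QuotientGroup.mk' S) <
        (listStab G (l.take i)).map (QuotientGroup.mk' S))) ∧
    ((Finset.range l.length).filter
        (fun i => listStab G (l.take (i + 1)) ⊓ S = listStab G (l.take i) ⊓ S)).card ≤
      Nat.log 2 (Nat.card (G ⧸ S)) :=
  stmt_16_general S l hl
end
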